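/- Let z ∈ ℝ₊^{N_ε × (2^K−1)} be defined by z_{i,C} = p_C L_C for all cells i and classes C, in the symmetric setting on a square torus. If λ < K / (𝔏 · ⟨ℓ^ε_D⟩), then for every i and C: λ p_C ε² < (1/L_C) · |C| z_{i,C} / (∑_{k,U} ℓ^ε(a_k,a_i) |C∩U| z_{k,U}). -/

import Mathlib

/-- The set of nonempty subsets (classes) of `{1,…,K}`. -/
def PK (K : ℕ) : Finset (Finset (Fin K)) :=
  (Finset.univ : Finset (Fin K)).powerset.erase ∅

/-!
Counting the pairs `(j, U)` with `j ∈ C ∩ U` site by site gives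
`∑_U |C ∩ U| f U = ∑_{j ∈ C} ∑_{U ∋ j} f U`. When `f U` depends only on `|U|`, a transposition
of sites shows that the inner sum does not depend on `j`, whence
`∑_U |C ∩ U| f U = (|C| / K) ∑_U |U| f U`. With `f = p L` and the torus identity
`∑_k ℓ(a_k, a_i) = ⟨ℓ_D⟩ / ε²`, the denominator of the drift ratio is `⟨ℓ_D⟩ |C| 𝔏 / (K ε²)`,
and the claim reduces to `λ 𝔏 ⟨ℓ_D⟩ < K`.
-/

open Finset

namespace Finset

variable {ι R : Type*} [Fintype ι] [DecidableEq ι] [CommSemiring R]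

theorem sum_card_inter_mul (C : Finset ι) (f : Finset ι → R) :
    ∑ U, ((C ∩ U).card : R) * f U = ∑ j ∈ C, ∑ U with j ∈ U, f U := by
  have hcard : ∀ U : Finset ι, ((C ∩ U).card : R) * f U = ∑ j ∈ C, if j ∈ U then f U else 0 := by
    intro U
    rw [sum_ite_mem, sum_const, ← filter_mem_eq_inter, nsmul_eq_mul]
  simp_rw [hcard, sum_filter]
  exact sum_comm

theorem sum_filter_mem_eq_of_card_eq (f : Finset ι → R)
    (hf : ∀ C D : Finset ι, C.card = D.card → f C = f D) (j j' : ι) :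
    ∑ U with j ∈ U, f U = ∑ U with j' ∈ U, f U := by
  let σ := Equiv.finsetCongr (Equiv.swap j j')
  rw [sum_filter, sum_filter, ← σ.sum_comp]
  refine sum_congr rfl fun U _ => ?_
  simp [σ, Equiv.finsetCongr_apply, hf _ U (card_map _)]

theorem card_mul_sum_card_inter_mul (C : Finset ι) (f : Finset ι → R)
    (hf : ∀ C D : Finset ι, C.card = D.card → f C = f D) :
    (Fintype.card ι : R) * ∑ U, ((C ∩ U).card : R) * f U =
      (C.card : R) * ∑ U, (U.card : R) * f U := by
  have huniv := sum_card_inter_mul univ f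
  simp only [univ_inter] at huniv
  rw [huniv, sum_card_inter_mul]
  calc (Fintype.card ι : R) * ∑ j ∈ C, ∑ U with j ∈ U, f U
      = ∑ j ∈ C, ∑ _j' : ι, ∑ U with j ∈ U, f U := by simp [mul_sum]
    _ = ∑ _j ∈ C, ∑ j' : ι, ∑ U with j' ∈ U, f U :=
      sum_congr rfl fun j _ => sum_congr rfl fun j' _ => sum_filter_mem_eq_of_card_eq f hf j j'
    _ = (C.card : R) * ∑ j' : ι, ∑ U with j' ∈ U, f U := by simp

end Finset

theorem mem_PK {K : ℕ} {U : Finset (Fin K)} : U ∈ PK K ↔ U.Nonempty := by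
  simp [PK, nonempty_iff_ne_empty]

theorem sum_PK_eq_sum_univ {M : Type*} [AddCommMonoid M] {K : ℕ} (F : Finset (Fin K) → M)
    (hF : F ∅ = 0) :
    ∑ U ∈ PK K, F U = ∑ U, F U := by
  rw [PK, sum_erase _ hF, powerset_univ]

theorem sum_PK_card_inter_mul {K : ℕ} (C : Finset (Fin K)) (f : Finset (Fin K) → ℝ)
    (hf : ∀ C D : Finset (Fin K), C.card = D.card → f C = f D) :
    ∑ U ∈ PK K, ((C ∩ U).card : ℝ) * f U = C.card / K * ∑ U ∈ PK K, (U.card : ℝ) * f U := by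
  rcases K.eq_zero_or_pos with rfl | hK
  · simp [PK]
  rw [sum_PK_eq_sum_univ _ (by simp), sum_PK_eq_sum_univ _ (by simp), div_mul_eq_mul_div,
    ← card_mul_sum_card_inter_mul C f hf, Fintype.card_fin, mul_div_cancel_left₀ _ (by positivity)]

theorem drift_condition_symmetric_general (K Nε : ℕ)
    (ε lam lD : ℝ) (hε : 0 < ε) (hlD : 0 < lD)
    (p L : Finset (Fin K) → ℝ)
    (hp : ∀ C, 0 < p C) (hL : ∀ C, 0 < L C)
    (hpsym : ∀ C D : Finset (Fin K), C.card = D.card → p C = p D)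
    (hLsym : ∀ C D : Finset (Fin K), C.card = D.card → L C = L D)
    (la : Fin Nε → Fin Nε → ℝ)
    (htorus : ∀ i, ∑ k, la k i = lD / ε ^ 2)
    (hlt : lam < (K : ℝ) / ((∑ U ∈ PK K, (U.card : ℝ) * p U * L U) * lD)) :
    ∀ i : Fin Nε, ∀ C ∈ PK K,
      lam * p C * ε ^ 2 <
        (1 / L C) * ((C.card : ℝ) * (p C * L C)) /
          (∑ k, ∑ U ∈ PK K, la k i * ((C ∩ U).card : ℝ) * (p U * L U)) := by
  intro i C hC
  obtain ⟨j, -⟩ := mem_PK.1 hC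
  have hKpos : (0 : ℝ) < K := Nat.cast_pos.2 j.pos
  have hCpos : (0 : ℝ) < C.card := Nat.cast_pos.2 (mem_PK.1 hC).card_pos
  set 𝔏 := ∑ U ∈ PK K, (U.card : ℝ) * (p U * L U)
  have h𝔏 : ∑ U ∈ PK K, (U.card : ℝ) * p U * L U = 𝔏 := by simp only [𝔏, mul_assoc]
  have h𝔏pos : 0 < 𝔏 := sum_pos (fun U hU => by
    have := (mem_PK.1 hU).card_pos; have := hp U; have := hL U; positivity) ⟨C, hC⟩
  have hinner : ∑ U ∈ PK K, ((C ∩ U).card : ℝ) * (p U * L U) = C.card / K * 𝔏 :=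
    sum_PK_card_inter_mul C (fun U => p U * L U) fun A B h => by rw [hpsym A B h, hLsym A B h]
  have hden : ∑ k, ∑ U ∈ PK K, la k i * ((C ∩ U).card : ℝ) * (p U * L U) =
      lD / ε ^ 2 * (C.card / K * 𝔏) := by
    simp_rw [mul_assoc, ← mul_sum, hinner, ← sum_mul, htorus]
  clear_value 𝔏
  rw [h𝔏, lt_div_iff₀ (mul_pos h𝔏pos hlD)] at hlt
  have hpC := hp C
  have hLC := hL C
  rw [hden, lt_div_iff₀ (by positivity)]
  calc lam * p C * ε ^ 2 * (lD / ε ^ 2 * (C.card / K * 𝔏))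
      = p C * C.card / K * (lam * (𝔏 * lD)) := by field_simp
    _ < p C * C.card / K * K := mul_lt_mul_of_pos_left hlt (by positivity)
    _ = 1 / L C * (C.card * (p C * L C)) := by field_simp

/-- Drift condition: with `z_{i,C} = p_C L_C` in the symmetric setting on the torus,
`λ < K/(𝔏⟨ℓ^ε_D⟩)` implies `λ p_C ε² < (1/L_C)·|C| z_{i,C}/∑_{k,U} ℓ^ε(a_k,a_i)|C∩U| z_{k,U}`. -/
theorem drift_condition_symmetric (K Nε : ℕ) (hK : 1 ≤ K)
    (ε lam lD : ℝ) (hε : 0 < ε) (hlD : 0 < lD) (hlam : 0 ≤ lam)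
    (p L : Finset (Fin K) → ℝ)
    (hp : ∀ C, 0 < p C) (hL : ∀ C, 0 < L C)
    (hpsym : ∀ C D : Finset (Fin K), C.card = D.card → p C = p D)
    (hLsym : ∀ C D : Finset (Fin K), C.card = D.card → L C = L D)
    (la : Fin Nε → Fin Nε → ℝ) (hla : ∀ i k, 0 ≤ la k i)
    (htorus : ∀ i, ∑ k, la k i = lD / ε ^ 2)
    (hlt : lam < (K : ℝ) / ((∑ U ∈ PK K, (U.card : ℝ) * p U * L U) * lD)) :
    ∀ i : Fin Nε, ∀ C ∈ PK K,
      lam * p C * ε ^ 2 <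
        (1 / L C) * ((C.card : ℝ) * (p C * L C)) /
          (∑ k, ∑ U ∈ PK K, la k i * ((C ∩ U).card : ℝ) * (p U * L U)) :=
  drift_condition_symmetric_general K Nε ε lam lD hε hlD p L hp hL hpsym hLsym la htorus hlt
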